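/- Let M > 0 and η > 0. There exist constants C, η₁, η₂ > 0 such that for all y ≤ 0, all w ∈ ℝ, and all τ > 0: e^{−(w−y)²/(Mτ)} · e^{−η|y|} ≤ C ( e^{−w²/(4Mτ)} · e^{−η|y|} + e^{−(w−y)²/(Mτ)} · e^{−η₁|y|} · e^{−η₂|w|} ). -/

import Mathlib

/-!
Split according to whether `|w| ≤ 2|y|`. If so, `|y|` controls `|w|`, so part of the decay
`e^{-η|y|}` can be traded for decay in `|w|`. Otherwise `|w - y| ≥ |w| - |y| > |w| / 2`, so the
Gaussian centred at `w` is dominated by the wider Gaussian `e^{-w²/(4Mτ)}`.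
-/

open Real

lemma sq_div_four_le_sub_sq_of_two_mul_abs_lt {w y : ℝ} (h : 2 * |y| < |w|) :
    w ^ 2 / 4 ≤ (w - y) ^ 2 := by
  have hsub : |w| / 2 ≤ |w - y| := by linarith [abs_sub_abs_le_abs_sub w y]
  calc w ^ 2 / 4 = (|w| / 2) ^ 2 := by rw [div_pow, sq_abs]; norm_num
    _ ≤ |w - y| ^ 2 := pow_le_pow_left₀ (by positivity) hsub 2
    _ = (w - y) ^ 2 := sq_abs _

lemma exp_neg_sub_sq_div_le_of_two_mul_abs_lt {s w y : ℝ} (hs : 0 < s) (h : 2 * |y| < |w|) :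
    exp (-(w - y) ^ 2 / s) ≤ exp (-w ^ 2 / (4 * s)) := by
  rw [exp_le_exp, neg_div, neg_div, neg_le_neg_iff, ← div_div]
  exact div_le_div_of_nonneg_right (sq_div_four_le_sub_sq_of_two_mul_abs_lt h) hs.le

lemma exp_neg_mul_abs_le_of_abs_le_two_mul_abs {η w y : ℝ} (hη : 0 ≤ η) (h : |w| ≤ 2 * |y|) :
    exp (-η * |y|) ≤ exp (-(η / 2) * |y|) * exp (-(η / 4) * |w|) := by
  rw [← exp_add, exp_le_exp]
  nlinarith

theorem gaussian_localization_split (M η : ℝ) (hM : 0 < M) (hη : 0 < η) :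
    ∃ C > 0, ∃ η₁ > 0, ∃ η₂ > 0, ∀ y : ℝ, y ≤ 0 → ∀ w : ℝ, ∀ τ : ℝ, 0 < τ →
      Real.exp (-(w - y)^2 / (M*τ)) * Real.exp (-η * |y|) ≤
        C * (Real.exp (-w^2 / (4*M*τ)) * Real.exp (-η * |y|) +
          Real.exp (-(w - y)^2 / (M*τ)) * Real.exp (-η₁ * |y|) *
            Real.exp (-η₂ * |w|)) := by
  refine ⟨1, one_pos, η / 2, by positivity, η / 4, by positivity, fun y _ w τ hτ => ?_⟩
  rw [one_mul]
  rcases le_or_gt |w| (2 * |y|) with hw | hw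
  · refine le_add_of_nonneg_of_le (by positivity) ?_
    rw [mul_assoc]
    gcongr
    exact exp_neg_mul_abs_le_of_abs_le_two_mul_abs hη.le hw
  · refine le_add_of_le_of_nonneg ?_ (by positivity)
    rw [mul_assoc 4]
    exact mul_le_mul_of_nonneg_right
      (exp_neg_sub_sq_div_le_of_two_mul_abs_lt (by positivity) hw) (exp_pos _).le
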